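/- arXiv:2511.20535 — 2 statements merged into one kernel-verified Lean document; each statement's English description precedes it below -/
import Mathlib

section
/- Assume |c| < 1. If (x,y) ∈ P, then ‖gⁿ(x,y)‖ → +∞ as n → +∞ (that is, the norms of the backward iterates of (x,y) tend to infinity). -/
variable {p : ℕ}

/-- The unique `f`-preimage map `g(u,v) = (v, (u - c)/v)`. -/
noncomputable def g [Fact p.Prime] (c : ℚ_[p]) (z : ℚ_[p] × ℚ_[p]) : ℚ_[p] × ℚ_[p] :=
  (z.2, (z.1 - c) / z.2)

/-- The set `Q` of points whose backward iterates are all defined. -/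
def QSet [Fact p.Prime] (c : ℚ_[p]) : Set (ℚ_[p] × ℚ_[p]) :=
  {z | ∀ n : ℕ, ((g c)^[n] z).2 ≠ 0}

/-- `‖(x,y)‖ = max(|x|,|y|)`. -/
noncomputable def pnorm [Fact p.Prime] (z : ℚ_[p] × ℚ_[p]) : ℝ := max ‖z.1‖ ‖z.2‖

/-- The backward filled Julia set `K⁻`. -/
def KMinus [Fact p.Prime] (c : ℚ_[p]) : Set (ℚ_[p] × ℚ_[p]) :=
  {z | z ∈ QSet c ∧ ∃ M : ℝ, ∀ n : ℕ, pnorm ((g c)^[n] z) ≤ M}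

/-!
Write `gⁿ(x, y) = (wₙ₋₁, wₙ)` with `w₋₁ = x`, so that `wₙ₊₁ wₙ₊₂ = wₙ - c`. The valuations
`vₙ = v(wₙ)` satisfy `vₙ₊₁ + vₙ₊₂ = min(vₙ, v(c))` when `vₙ ≠ v(c)` and `vₙ₊₁ + vₙ₊₂ ≥ v(c)`
otherwise (read `v(0) = ∞`), with `v₀ ≥ 1`, and `(x, y) ∉ R` rules out `v₀ = v₁ = v(c)`. If all
`vₙ` stayed nonnegative they would be positive and eventually below `v(c)`, where
`vₙ₊₂ = vₙ - vₙ₊₁ < vₙ`: impossible. Once some `vₙ < 0`, consecutive valuations alternate in sign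
and the negative one keeps decreasing, so `min(vₙ, vₙ₊₁) → -∞`, which is `‖gⁿ(x, y)‖ → ∞`.
-/

open Filter

section IntegerRecurrences

variable {v : ℕ → ℤ}

theorem tendsto_atBot_of_forall_add_two_lt {w : ℕ → ℤ} (h : ∀ n, w (n + 2) < w n) :
    Tendsto w atTop atBot := by
  have bound : ∀ n, w n + (n / 2 : ℕ) ≤ max (w 0) (w 1) := by
    intro n
    induction n using Nat.twoStepInduction with
    | zero => simp
    | one => simp
    | more n ih _ =>
      have := h n
      omega
  refine tendsto_atBot.2 fun b => eventually_atTop.2 ⟨2 * (max (w 0) (w 1) - b).toNat, ?_⟩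
  intro n hn
  have := bound n
  omega

theorem exists_lt_one_of_add_eq (hrec : ∀ n, v (n + 1) + v (n + 2) = v n) : ∃ n, v n < 1 := by
  by_contra! hpos
  have hdesc : ∀ n, v (n + 2) < v n := fun n => by have := hrec n; have := hpos (n + 1); omega
  obtain ⟨n, hn⟩ := (tendsto_atBot.1 (tendsto_atBot_of_forall_add_two_lt hdesc) 0).exists
  have := hpos n
  omega

theorem one_le_of_nonneg_of_add_eq_zero_iff (hnonneg : ∀ n, 0 ≤ v n)
    (hzero : ∀ n, v (n + 1) + v (n + 2) = 0 ↔ v n = 0) (h01 : ¬(v 0 = 0 ∧ v 1 = 0)) (n : ℕ) :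
    1 ≤ v n := by
  have hpair : ∀ n, ¬(v n = 0 ∧ v (n + 1) = 0) := by
    intro n
    induction n with
    | zero => exact h01
    | succ k ih => exact fun ⟨h1, (h2 : v (k + 2) = 0)⟩ => ih ⟨(hzero k).1 (by omega), h1⟩
  by_contra hn
  have := (hzero n).2 (by have := hnonneg n; omega)
  have := hnonneg (n + 1)
  have := hnonneg (n + 2)
  exact hpair (n + 1) ⟨by omega, show v (n + 2) = 0 by omega⟩

theorem exists_neg_and_nonneg_succ (hrec : ∀ n, v n < 0 → v (n + 1) + v (n + 2) = v n)
    (hneg : ∃ n, v n < 0) : ∃ m, v m < 0 ∧ 0 ≤ v (m + 1) := by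
  obtain ⟨n, hn⟩ := hneg
  by_contra! hstay
  have hall : ∀ k, v (k + n) < 0 := by
    intro k
    induction k with
    | zero => simpa using hn
    | succ k ih => simpa [add_right_comm] using hstay _ ih
  have hasc : ∀ k, -v (k + 2 + n) < -v (k + n) := by
    intro k
    have := hrec (k + n) (hall k)
    have := hall (k + 1)
    simp only [add_right_comm _ n] at *
    omega
  obtain ⟨k, hk⟩ := (tendsto_atBot.1 (tendsto_atBot_of_forall_add_two_lt hasc) (-1)).exists
  exact absurd (hall k) (by omega)

theorem tendsto_min_atBot_of_exists_neg (hrec : ∀ n, v n < 0 → v (n + 1) + v (n + 2) = v n)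
    (hnonneg : ∀ n, 0 ≤ v n → 0 ≤ v (n + 1) + v (n + 2)) (hneg : ∃ n, v n < 0) :
    Tendsto (fun n => min (v n) (v (n + 1))) atTop atBot := by
  obtain ⟨m, hm, hm1⟩ := exists_neg_and_nonneg_succ hrec hneg
  let Alternates (a b : ℤ) : Prop := (a < 0 ∧ 0 < b) ∨ (0 < a ∧ b < 0)
  have hstep : ∀ n, Alternates (v n) (v (n + 1)) → Alternates (v (n + 1)) (v (n + 2)) ∧
      min (v (n + 2)) (v (n + 3)) < min (v n) (v (n + 1)) := by
    rintro n (⟨hn, hn1⟩ | ⟨hn, hn1⟩)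
    · have := hrec n hn
      exact ⟨Or.inr ⟨hn1, by omega⟩, by omega⟩
    · have := hnonneg n hn.le
      have : v (n + 2) + v (n + 3) = v (n + 1) := hrec (n + 1) hn1
      exact ⟨Or.inl ⟨hn1, by omega⟩, by omega⟩
  have halt : ∀ k, Alternates (v (k + (m + 2))) (v (k + (m + 2) + 1)) := by
    intro k
    induction k with
    | zero =>
      have := hrec m hm
      have : 0 ≤ v (m + 2) + v (m + 3) := hnonneg (m + 1) hm1
      rw [zero_add]
      exact Or.inl ⟨by omega, show 0 < v (m + 3) by omega⟩
    | succ k ih => simpa only [add_right_comm k 1] using (hstep _ ih).1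
  refine (tendsto_add_atTop_iff_nat (m + 2)).1 (tendsto_atBot_of_forall_add_two_lt fun k => ?_)
  simpa only [add_right_comm k 2, add_assoc] using (hstep _ (halt k)).2

theorem tendsto_min_atBot_of_add_eq (hrec : ∀ n, v (n + 1) + v (n + 2) = v n)
    (h01 : ¬(v 0 = 0 ∧ v 1 = 0)) : Tendsto (fun n => min (v n) (v (n + 1))) atTop atBot := by
  refine tendsto_min_atBot_of_exists_neg (fun n _ => hrec n) (fun n hn => (hrec n).symm ▸ hn) ?_
  by_contra! hnonneg
  obtain ⟨n, hn⟩ := exists_lt_one_of_add_eq hrec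
  have := one_le_of_nonneg_of_add_eq_zero_iff hnonneg (fun n => by rw [hrec]) h01 n
  omega

theorem exists_lt_one_of_add_eq_min {γ : ℤ}
    (heq : ∀ n, v n ≠ γ → v (n + 1) + v (n + 2) = min (v n) γ) (h0 : v 0 ≠ γ) : ∃ n, v n < 1 := by
  by_contra! hpos
  have hbelow : ∀ k, v (k + 1) < γ ∧ v (k + 2) < γ := by
    intro k
    induction k with
    | zero =>
      have : v 1 + v 2 = min (v 0) γ := heq 0 h0
      have := hpos 1
      have := hpos 2
      exact ⟨show v 1 < γ by omega, show v 2 < γ by omega⟩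
    | succ k ih =>
      have : v (k + 2) + v (k + 3) = min (v (k + 1)) γ := heq (k + 1) ih.1.ne
      have := hpos (k + 2)
      exact ⟨ih.2, show v (k + 3) < γ by omega⟩
  obtain ⟨n, hn⟩ := exists_lt_one_of_add_eq (v := fun k => v (k + 1)) fun k => by
    have hk := (hbelow k).1
    have : v (k + 2) + v (k + 3) = min (v (k + 1)) γ := heq (k + 1) hk.ne
    show v (k + 2) + v (k + 3) = v (k + 1)
    omega
  exact absurd (hpos (n + 1)) (not_le.2 hn)

theorem tendsto_min_atBot_of_add_eq_min {γ : ℤ} (hγ : 1 ≤ γ)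
    (hge : ∀ n, min (v n) γ ≤ v (n + 1) + v (n + 2))
    (heq : ∀ n, v n ≠ γ → v (n + 1) + v (n + 2) = min (v n) γ)
    (h01 : ¬(v 0 = 0 ∧ v 1 = 0)) (hγγ : ¬(v 0 = γ ∧ v 1 = γ)) :
    Tendsto (fun n => min (v n) (v (n + 1))) atTop atBot := by
  refine tendsto_min_atBot_of_exists_neg (fun n hn => by rw [heq n (by omega)]; omega)
    (fun n hn => by have := hge n; omega) ?_
  by_contra! hnonneg
  have hzero : ∀ n, v (n + 1) + v (n + 2) = 0 ↔ v n = 0 := by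
    intro n
    by_cases hn : v n = γ
    · have := hge n
      omega
    · have := heq n hn
      omega
  have hpos := one_le_of_nonneg_of_add_eq_zero_iff hnonneg hzero h01
  obtain ⟨n, hn⟩ : ∃ n, v n < 1 := by
    by_cases h0 : v 0 = γ
    · obtain ⟨n, hn⟩ := exists_lt_one_of_add_eq_min (v := fun k => v (k + 1))
        (fun n hn => heq (n + 1) hn) fun h1 => hγγ ⟨h0, h1⟩
      exact ⟨n + 1, hn⟩
    · exact exists_lt_one_of_add_eq_min heq h0
  exact absurd (hpos n) (not_le.2 hn)

end IntegerRecurrences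

section

variable [hp : Fact p.Prime]

namespace Padic

theorem norm_eq_of_valuation_eq {x y : ℚ_[p]} (hx : x ≠ 0) (hy : y ≠ 0)
    (h : x.valuation = y.valuation) : ‖x‖ = ‖y‖ := by
  rw [norm_eq_zpow_neg_valuation hx, norm_eq_zpow_neg_valuation hy, h]

theorem one_le_valuation_of_norm_lt_one {x : ℚ_[p]} (hx : x ≠ 0) (h : ‖x‖ < 1) :
    1 ≤ x.valuation := by
  rw [norm_eq_zpow_neg_valuation hx, zpow_lt_one_iff_right₀ (mod_cast hp.out.one_lt)] at h
  omega

theorem min_valuation_le_valuation_sub {x y : ℚ_[p]} (hx : x ≠ 0) (hy : y ≠ 0)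
    (hxy : x - y ≠ 0) : min x.valuation y.valuation ≤ (x - y).valuation := by
  have := addValuation.map_sub x y
  rwa [addValuation.apply hx, addValuation.apply hy, addValuation.apply hxy, ← WithTop.coe_min,
    WithTop.coe_le_coe] at this

theorem valuation_sub_of_valuation_ne {x y : ℚ_[p]} (hx : x ≠ 0) (hy : y ≠ 0) (hxy : x - y ≠ 0)
    (h : x.valuation ≠ y.valuation) : (x - y).valuation = min x.valuation y.valuation := by
  have := addValuation.map_add_of_distinct_val (x := x) (y := -y)
    (by rw [AddValuation.map_neg, addValuation.apply hx, addValuation.apply hy]; exact_mod_cast h)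
  rwa [← sub_eq_add_neg, AddValuation.map_neg, addValuation.apply hx, addValuation.apply hy,
    addValuation.apply hxy, ← WithTop.coe_min, WithTop.coe_inj] at this

theorem tendsto_max_norm_atTop {u : ℕ → ℚ_[p]} (hu : ∀ n, u n ≠ 0)
    (h : Tendsto (fun n => min (u n).valuation (u (n + 1)).valuation) atTop atBot) :
    Tendsto (fun n => max ‖u n‖ ‖u (n + 1)‖) atTop atTop := by
  have hp1 : (1 : ℝ) < p := mod_cast hp.out.one_lt
  have hzpow : Tendsto (fun k : ℤ => (p : ℝ) ^ k) atTop atTop :=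
    (zpow_right_mono₀ hp1.le).tendsto_atTop_atTop fun b =>
      let ⟨n, hn⟩ := pow_unbounded_of_one_lt b hp1
      ⟨n, by simpa using hn.le⟩
  refine (hzpow.comp (tendsto_neg_atBot_atTop.comp h)).congr fun n => ?_
  simp only [Function.comp_apply, norm_eq_zpow_neg_valuation (hu _), ← max_neg_neg,
    (zpow_right_mono₀ hp1.le).map_max]

end Padic

theorem g_iterate_succ_fst (c : ℚ_[p]) (z : ℚ_[p] × ℚ_[p]) (n : ℕ) :
    ((g c)^[n + 1] z).1 = ((g c)^[n] z).2 := by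
  rw [Function.iterate_succ_apply']
  rfl

theorem snd_mul_g_snd (c : ℚ_[p]) {w : ℚ_[p] × ℚ_[p]} (hw : w.2 ≠ 0) : w.2 * (g c w).2 = w.1 - c :=
  mul_div_cancel₀ _ hw

theorem g_iterate_snd_mul_snd {c : ℚ_[p]} {z : ℚ_[p] × ℚ_[p]} (hz : z ∈ QSet c) (n : ℕ) :
    ((g c)^[n + 1] z).2 * ((g c)^[n + 2] z).2 = ((g c)^[n] z).2 - c := by
  rw [Function.iterate_succ_apply' _ (n + 1), snd_mul_g_snd c (hz (n + 1)), g_iterate_succ_fst]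

theorem norm_eq_of_valuation_snd_eq {c : ℚ_[p]} (hc0 : c ≠ 0) (hc : ‖c‖ < 1)
    {z : ℚ_[p] × ℚ_[p]} (hz : z.2 ≠ 0) (hgz : (g c z).2 ≠ 0) (h0 : z.2.valuation = c.valuation)
    (h1 : (g c z).2.valuation = c.valuation) : ‖z.1‖ = ‖c‖ ∧ ‖z.2‖ = ‖c‖ := by
  have hz2 : ‖z.2‖ = ‖c‖ := Padic.norm_eq_of_valuation_eq hz hc0 h0
  refine ⟨Padic.norm_eq_of_norm_sub_lt_right ?_, hz2⟩
  rw [← snd_mul_g_snd c hz, norm_mul, hz2, Padic.norm_eq_of_valuation_eq hgz hc0 h1]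
  exact mul_lt_of_lt_one_left (norm_pos_iff.2 hc0) hc

theorem pnorm_g_iterate_succ (c : ℚ_[p]) (z : ℚ_[p] × ℚ_[p]) (n : ℕ) :
    pnorm ((g c)^[n + 1] z) = max ‖((g c)^[n] z).2‖ ‖((g c)^[n + 1] z).2‖ := by
  rw [pnorm, g_iterate_succ_fst]

end

theorem stmt7_general [Fact p.Prime] (c : ℚ_[p]) (hc : ‖c‖ < 1)
    (R : Set (ℚ_[p] × ℚ_[p])) (hR : R = {z ∈ QSet c | ‖z.1‖ = ‖c‖ ∧ ‖z.2‖ = ‖c‖})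
    (P : Set (ℚ_[p] × ℚ_[p])) (hP : P = {z ∈ QSet c | ‖z.1‖ < 1 ∧ ‖z.2‖ < 1} \ R) :
    ∀ z ∈ P,
      Filter.Tendsto (fun n : ℕ => pnorm ((g c)^[n] z)) Filter.atTop Filter.atTop := by
  subst hR hP
  rintro z ⟨⟨hzQ, -, hy⟩, hzR⟩
  set w : ℕ → ℚ_[p] := fun n => ((g c)^[n] z).2
  have hw : ∀ n, w n ≠ 0 := hzQ
  have hval : ∀ n, (w (n + 1)).valuation + (w (n + 2)).valuation = (w n - c).valuation :=
    fun n => by rw [← Padic.valuation_mul (hw _) (hw _), g_iterate_snd_mul_snd hzQ]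
  have h01 : ¬((w 0).valuation = 0 ∧ (w 1).valuation = 0) := fun h =>
    (Padic.one_le_valuation_of_norm_lt_one (hw 0) hy).not_gt (by omega)
  rw [← tendsto_add_atTop_iff_nat 1]
  simp only [pnorm_g_iterate_succ]
  refine Padic.tendsto_max_norm_atTop hw ?_
  rcases eq_or_ne c 0 with rfl | hc0
  · exact tendsto_min_atBot_of_add_eq (fun n => by rw [hval, sub_zero]) h01
  have hwc : ∀ n, w n - c ≠ 0 := fun n => by
    rw [← g_iterate_snd_mul_snd hzQ]
    exact mul_ne_zero (hw _) (hw _)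
  refine tendsto_min_atBot_of_add_eq_min (Padic.one_le_valuation_of_norm_lt_one hc0 hc)
    (fun n => hval n ▸ Padic.min_valuation_le_valuation_sub (hw n) hc0 (hwc n))
    (fun n hn => hval n ▸ Padic.valuation_sub_of_valuation_ne (hw n) hc0 (hwc n) hn) h01 ?_
  exact fun ⟨h0, h1⟩ => hzR ⟨hzQ, norm_eq_of_valuation_snd_eq hc0 hc (hw 0) (hw 1) h0 h1⟩

/-- If `|c| < 1` and `(x,y) ∈ P`, then `‖gⁿ(x,y)‖ → +∞`. -/
theorem stmt7 [Fact p.Prime] (hodd : Odd p) (c : ℚ_[p]) (hc : ‖c‖ < 1)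
    (R : Set (ℚ_[p] × ℚ_[p])) (hR : R = {z ∈ QSet c | ‖z.1‖ = ‖c‖ ∧ ‖z.2‖ = ‖c‖})
    (P : Set (ℚ_[p] × ℚ_[p])) (hP : P = {z ∈ QSet c | ‖z.1‖ < 1 ∧ ‖z.2‖ < 1} \ R) :
    ∀ z ∈ P,
      Filter.Tendsto (fun n : ℕ => pnorm ((g c)^[n] z)) Filter.atTop Filter.atTop :=
  stmt7_general c hc R hR P hP
end

section
/- Let c = 1 and (x,y) = (-1, -p). Then (x,y) ∈ Q (i.e., all backward iterates gⁿ(x,y) are defined), max(|x|, |y|) = 1, and writing (x_{-n}, y_{-n}) = gⁿ(x,y), one has (|x_{-1}|, |y_{-1}|) = (p^{-1}, p) and for every n ≥ 1, (|x_{-2n}|, |y_{-2n}|) = (p^{2^{n-1}}, p^{-2^{n-1}}) and (|x_{-2n-1}|, |y_{-2n-1}|) = (p^{-2^{n-1}}, p^{2ⁿ}). In particular ‖gⁿ(x,y)‖ → +∞ as n → +∞, so (x,y) ∉ K⁻. -/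
variable {p : ℕ}

/-!
Since `|c| = 1`, the ultrametric inequality gives `|(u - c)/v| = 1/|v|` when `|u| < 1` and
`|u|/|v|` when `|u| > 1`. Hence a point with norms `(r, 1/r)`, `r > 1`, is sent by `g` to norms
`(1/r, r²)` and by `g²` to norms `(r², 1/r²)`: the exponent doubles every two steps. The point
`(-1, -p)` reaches norms `(p, 1/p)` after two steps (this uses `|2| = 1`, i.e. `p` odd).
-/

open Filter

section Orbit

variable [Fact p.Prime] {c : ℚ_[p]}

lemma mem_QSet_of_g_mem {w : ℚ_[p] × ℚ_[p]} (hw : w.2 ≠ 0) (h : g c w ∈ QSet c) :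
    w ∈ QSet c
  | 0 => hw
  | n + 1 => by rw [Function.iterate_succ_apply]; exact h n

lemma notMem_KMinus_of_tendsto {w : ℚ_[p] × ℚ_[p]}
    (h : Tendsto (fun n : ℕ => pnorm ((g c)^[n] w)) atTop atTop) : w ∉ KMinus c := by
  rintro ⟨-, M, hM⟩
  exact not_bddAbove_of_tendsto_atTop h ⟨M, by rintro _ ⟨n, rfl⟩; exact hM n⟩

lemma norm_g_snd_of_norm_fst_lt_one (hc : ‖c‖ = 1) {w : ℚ_[p] × ℚ_[p]} (h : ‖w.1‖ < 1) :
    ‖(g c w).2‖ = ‖w.2‖⁻¹ := by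
  have hne : ‖w.1‖ ≠ ‖-c‖ := by rw [norm_neg, hc]; exact h.ne
  rw [g, norm_div, sub_eq_add_neg, IsUltrametricDist.norm_add_eq_max_of_norm_ne_norm hne,
    norm_neg, hc, max_eq_right h.le, one_div]

lemma norm_g_snd_of_one_lt_norm_fst (hc : ‖c‖ = 1) {w : ℚ_[p] × ℚ_[p]} (h : 1 < ‖w.1‖) :
    ‖(g c w).2‖ = ‖w.1‖ / ‖w.2‖ := by
  have hne : ‖w.1‖ ≠ ‖-c‖ := by rw [norm_neg, hc]; exact h.ne'
  rw [g, norm_div, sub_eq_add_neg, IsUltrametricDist.norm_add_eq_max_of_norm_ne_norm hne,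
    norm_neg, hc, max_eq_left h.le]

lemma norm_g_of_norm_eq (hc : ‖c‖ = 1) {r : ℝ} (hr : 1 < r) {w : ℚ_[p] × ℚ_[p]}
    (h1 : ‖w.1‖ = r) (h2 : ‖w.2‖ = r⁻¹) : ‖(g c w).1‖ = r⁻¹ ∧ ‖(g c w).2‖ = r ^ 2 := by
  refine ⟨h2, ?_⟩
  rw [norm_g_snd_of_one_lt_norm_fst hc (h1 ▸ hr), h1, h2, div_inv_eq_mul, sq]

lemma norm_g_g_of_norm_eq (hc : ‖c‖ = 1) {r : ℝ} (hr : 1 < r) {w : ℚ_[p] × ℚ_[p]}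
    (h1 : ‖w.1‖ = r) (h2 : ‖w.2‖ = r⁻¹) :
    ‖(g c (g c w)).1‖ = r ^ 2 ∧ ‖(g c (g c w)).2‖ = (r ^ 2)⁻¹ := by
  obtain ⟨h1', h2'⟩ := norm_g_of_norm_eq hc hr h1 h2
  refine ⟨h2', ?_⟩
  rw [norm_g_snd_of_norm_fst_lt_one hc (h1' ▸ inv_lt_one_of_one_lt₀ hr), h2']

lemma norm_iterate_two_mul (hc : ‖c‖ = 1) {r : ℝ} (hr : 1 < r) {w : ℚ_[p] × ℚ_[p]}
    (h1 : ‖w.1‖ = r) (h2 : ‖w.2‖ = r⁻¹) (m : ℕ) :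
    ‖((g c)^[2 * m] w).1‖ = r ^ 2 ^ m ∧ ‖((g c)^[2 * m] w).2‖ = (r ^ 2 ^ m)⁻¹ := by
  induction m with
  | zero => simpa using ⟨h1, h2⟩
  | succ m ih =>
    rw [show 2 * (m + 1) = 2 + 2 * m by ring, Function.iterate_add_apply, pow_succ, pow_mul]
    exact norm_g_g_of_norm_eq hc (one_lt_pow₀ hr (by positivity)) ih.1 ih.2

lemma norm_iterate_two_mul_add_one (hc : ‖c‖ = 1) {r : ℝ} (hr : 1 < r) {w : ℚ_[p] × ℚ_[p]}
    (h1 : ‖w.1‖ = r) (h2 : ‖w.2‖ = r⁻¹) (m : ℕ) :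
    ‖((g c)^[2 * m + 1] w).1‖ = (r ^ 2 ^ m)⁻¹ ∧ ‖((g c)^[2 * m + 1] w).2‖ = (r ^ 2 ^ m) ^ 2 := by
  obtain ⟨h1', h2'⟩ := norm_iterate_two_mul hc hr h1 h2 m
  rw [Function.iterate_succ_apply']
  exact norm_g_of_norm_eq hc (one_lt_pow₀ hr (by positivity)) h1' h2'

lemma mem_QSet_of_norm_eq (hc : ‖c‖ = 1) {r : ℝ} (hr : 1 < r) {w : ℚ_[p] × ℚ_[p]}
    (h1 : ‖w.1‖ = r) (h2 : ‖w.2‖ = r⁻¹) : w ∈ QSet c := by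
  have hr0 : 0 < r := zero_lt_one.trans hr
  intro k
  rw [← norm_ne_zero_iff]
  obtain ⟨m, rfl | rfl⟩ := Nat.even_or_odd' k
  · rw [(norm_iterate_two_mul hc hr h1 h2 m).2]; positivity
  · rw [(norm_iterate_two_mul_add_one hc hr h1 h2 m).2]; positivity

lemma pow_two_pow_div_two_le_pnorm_iterate (hc : ‖c‖ = 1) {r : ℝ} (hr : 1 < r)
    {w : ℚ_[p] × ℚ_[p]} (h1 : ‖w.1‖ = r) (h2 : ‖w.2‖ = r⁻¹) (k : ℕ) :
    r ^ 2 ^ (k / 2) ≤ pnorm ((g c)^[k] w) := by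
  obtain ⟨m, rfl | rfl⟩ := Nat.even_or_odd' k
  · rw [show 2 * m / 2 = m by omega, ← (norm_iterate_two_mul hc hr h1 h2 m).1]
    exact le_max_left _ _
  · have hle : r ^ 2 ^ m ≤ (r ^ 2 ^ m) ^ 2 :=
      le_self_pow₀ (one_le_pow₀ hr.le) two_ne_zero
    rw [← (norm_iterate_two_mul_add_one hc hr h1 h2 m).2] at hle
    rw [show (2 * m + 1) / 2 = m by omega]
    exact hle.trans (le_max_right _ _)

lemma tendsto_pnorm_iterate (hc : ‖c‖ = 1) {r : ℝ} (hr : 1 < r) {w : ℚ_[p] × ℚ_[p]}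
    (h1 : ‖w.1‖ = r) (h2 : ‖w.2‖ = r⁻¹) :
    Tendsto (fun k : ℕ => pnorm ((g c)^[k] w)) atTop atTop :=
  tendsto_atTop_mono (pow_two_pow_div_two_le_pnorm_iterate hc hr h1 h2)
    ((tendsto_pow_atTop_atTop_of_one_lt hr).comp
      ((tendsto_pow_atTop_atTop_of_one_lt one_lt_two).comp (Nat.tendsto_div_const_atTop two_ne_zero)))

end Orbit

section NegOneNegP

variable [Fact p.Prime]

lemma one_lt_prime_cast : 1 < (p : ℝ) := by exact_mod_cast (Fact.out : p.Prime).one_lt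

lemma norm_two_eq_one_of_odd (hodd : Odd p) : ‖(2 : ℚ_[p])‖ = 1 := by
  have hp2 : p ≠ 2 := by rintro rfl; exact absurd hodd (by decide)
  exact_mod_cast Padic.norm_natCast_eq_one_iff.2 ((Nat.coprime_primes Fact.out Nat.prime_two).2 hp2)

lemma norm_g_neg_one_neg_p (hodd : Odd p) :
    ‖(g 1 (-1, -(p : ℚ_[p]))).1‖ = (p : ℝ)⁻¹ ∧ ‖(g 1 (-1, -(p : ℚ_[p]))).2‖ = p := by
  refine ⟨by simp [g, Padic.norm_p], ?_⟩
  rw [g, norm_div, show (-1 - 1 : ℚ_[p]) = -2 by norm_num, norm_neg, norm_neg, Padic.norm_p,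
    norm_two_eq_one_of_odd hodd, one_div, inv_inv]

lemma norm_g_g_neg_one_neg_p (hodd : Odd p) :
    ‖(g 1 (g 1 (-1, -(p : ℚ_[p])))).1‖ = p ∧
      ‖(g 1 (g 1 (-1, -(p : ℚ_[p])))).2‖ = (p : ℝ)⁻¹ := by
  obtain ⟨h1, h2⟩ := norm_g_neg_one_neg_p hodd
  refine ⟨h2, ?_⟩
  rw [norm_g_snd_of_norm_fst_lt_one norm_one (h1 ▸ inv_lt_one_of_one_lt₀ one_lt_prime_cast), h2]

end NegOneNegP

lemma zpow_two_pow {α : Type*} [DivInvMonoid α] (x : α) (m : ℕ) : x ^ (2 : ℤ) ^ m = x ^ 2 ^ m := by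
  exact_mod_cast zpow_natCast x (2 ^ m)

/-- For `c = 1` and `(x,y) = (-1, -p)`: `(x,y) ∈ Q`, `max(|x|,|y|) = 1`, the norms of
the backward iterates are as stated, and `(x,y) ∉ K⁻`. -/
theorem stmt19 [Fact p.Prime] (hodd : Odd p)
    (c : ℚ_[p]) (hc : c = 1)
    (z : ℚ_[p] × ℚ_[p]) (hz : z = (-1, -(p : ℚ_[p]))) :
    z ∈ QSet c ∧
      max ‖z.1‖ ‖z.2‖ = 1 ∧
      (‖((g c)^[1] z).1‖ = (p : ℝ)⁻¹ ∧ ‖((g c)^[1] z).2‖ = (p : ℝ)) ∧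
      (∀ n : ℕ, 1 ≤ n →
        ‖((g c)^[2*n] z).1‖ = (p : ℝ) ^ ((2:ℤ) ^ (n-1)) ∧
        ‖((g c)^[2*n] z).2‖ = (p : ℝ) ^ (-(2:ℤ) ^ (n-1)) ∧
        ‖((g c)^[2*n+1] z).1‖ = (p : ℝ) ^ (-(2:ℤ) ^ (n-1)) ∧
        ‖((g c)^[2*n+1] z).2‖ = (p : ℝ) ^ ((2:ℤ) ^ n)) ∧
      Filter.Tendsto (fun n : ℕ => pnorm ((g c)^[n] z)) Filter.atTop Filter.atTop ∧
      z ∉ KMinus c := by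
  subst hc hz
  have hp := one_lt_prime_cast (p := p)
  obtain ⟨h1x, h1y⟩ := norm_g_neg_one_neg_p hodd
  obtain ⟨h2x, h2y⟩ := norm_g_g_neg_one_neg_p hodd
  have htend : Tendsto (fun n : ℕ => pnorm ((g 1)^[n] (-1, -(p : ℚ_[p])))) atTop atTop :=
    (tendsto_add_atTop_iff_nat 2).1 (tendsto_pnorm_iterate norm_one hp h2x h2y)
  have hp0 : (p : ℝ) ≠ 0 := (zero_lt_one.trans hp).ne'
  refine ⟨mem_QSet_of_g_mem (by simpa using hp0) (mem_QSet_of_g_mem (norm_ne_zero_iff.1 (h1y ▸ hp0))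
    (mem_QSet_of_norm_eq norm_one hp h2x h2y)), ?_, ⟨h1x, h1y⟩, ?_, htend,
    notMem_KMinus_of_tendsto htend⟩
  · simpa [Padic.norm_p] using inv_le_one_of_one_le₀ hp.le
  · intro n hn
    obtain ⟨m, rfl⟩ := Nat.exists_eq_add_of_le' hn
    obtain ⟨he1, he2⟩ := norm_iterate_two_mul norm_one hp h2x h2y m
    obtain ⟨ho1, ho2⟩ := norm_iterate_two_mul_add_one norm_one hp h2x h2y m
    rw [show 2 * (m + 1) = 2 * m + 2 by ring, show 2 * m + 2 + 1 = 2 * m + 1 + 2 by ring,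
      Function.iterate_add_apply, Function.iterate_add_apply]
    rw [Nat.add_sub_cancel, zpow_neg, zpow_two_pow, zpow_two_pow, pow_succ, pow_mul]
    exact ⟨he1, he2, ho1, ho2⟩
end
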